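/- Fix integers N ≥ 2 and c ≥ 1. Let P be the polynomial ring over ℚ in the variables t_{k,α}, indexed by positive ODD integers k not divisible by N and components α ∈ {1,…,c}. For each positive EVEN integer a divisible by N, define the linear operator W_a on P by W_a = Σ_{α=1}^{c} ( (1/2) Σ_{j ≥ 1 odd, N∤j} (j+a) t_{j+a,α} ∂/∂t_{j,α} + (1/4) Σ_{i+j=a, i,j ≥ 1 odd, N∤i} i·j·t_{i,α} t_{j,α} ), where the quadratic sum acts by multiplication (note i odd and a even force j odd, and N∤i with N | a forces N∤j). Then for all positive even integers a, b divisible by N: W_a ∘ W_b − W_b ∘ W_a = ((b − a)/2) · W_{a+b} as linear endomorphisms of P. -/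

import Mathlib

/-! Write `W_a = ½ D_a + ¼ Q_a`, where `D_a` is the derivation `t_{k,α} ↦ (k+a) t_{k+a,α}` and
`Q_a` acts by multiplication. Multiplication operators commute with each other, so
`[W_a, W_b] = ¼ [D_a, D_b] + ⅛ (D_a Q_b − D_b Q_a)`. On generators
`[D_a, D_b] t_k = ((k+b)(k+a+b) − (k+a)(k+a+b)) t_{k+a+b} = (b − a) D_{a+b} t_k`, and shifting
the summation index along the antidiagonal gives `D_a Q_b − D_b Q_a = (b − a) Q_{a+b}`. -/

open MvPolynomial

/-- Indices of the time variables of the B type mcGD hierarchy: positive odd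
integers not divisible by `N`. -/
abbrev BGDTimeIndex (N : ℕ) : Type := {k : ℕ // 0 < k ∧ Odd k ∧ ¬ N ∣ k}

/-- Variables `t_{k,α}` of the polynomial ring: an odd time index together with
a component `α ∈ {1, …, c}`. -/
abbrev BGDVar (N c : ℕ) : Type := BGDTimeIndex N × Fin c

/-- The Virasoro operator
`W_a = Σ_α ( (1/2) Σ_{j ≥ 1 odd, N∤j} (j+a) t_{j+a,α} ∂/∂t_{j,α}
        + (1/4) Σ_{i+j=a, i,j ≥ 1 odd, N∤i} i j t_{i,α} t_{j,α} )`
acting on polynomials in the variables `t_{k,α}` (`k ≥ 1` odd, `N ∤ k`),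
for `a` a positive even multiple of `N`. -/
noncomputable def virasoroOpBGD (N c : ℕ) (a : ℕ) (hae : Even a) (ha : N ∣ a)
    (p : MvPolynomial (BGDVar N c) ℚ) : MvPolynomial (BGDVar N c) ℚ :=
  ((1 / 2 : ℚ) • ∑ᶠ (j : BGDTimeIndex N) (α : Fin c),
      ((j.1 + a : ℕ) : ℚ) •
        (X ((⟨j.1 + a,
              Nat.lt_of_lt_of_le j.2.1 (Nat.le_add_right _ _),
              j.2.2.1.add_even hae,
              fun hd => j.2.2.2 (by simpa using Nat.dvd_sub hd ha)⟩ : BGDTimeIndex N), α)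
          * pderiv ((j, α) : BGDVar N c) p))
  + ((1 / 4 : ℚ) • ∑ᶠ (i : BGDTimeIndex N) (j : BGDTimeIndex N) (α : Fin c),
      if i.1 + j.1 = a then
        ((i.1 : ℚ) * (j.1 : ℚ)) • (X ((i, α) : BGDVar N c) * X ((j, α) : BGDVar N c))
      else 0) * p

section VirasoroOp

variable {K A : Type*} [Field K] [CommRing A] [Algebra K A]

def virasoroOp (D : Derivation K A A) (Q : A) (p : A) : A :=
  (1 / 2 : K) • D p + ((1 / 4 : K) • Q) * p

theorem virasoroOp_commutator {D₁ D₂ D₃ : Derivation K A A} {Q₁ Q₂ Q₃ : A} {s : K}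
    (hD : ⁅D₁, D₂⁆ = s • D₃) (hQ : D₁ Q₂ - D₂ Q₁ = s • Q₃) (p : A) :
    virasoroOp D₁ Q₁ (virasoroOp D₂ Q₂ p) - virasoroOp D₂ Q₂ (virasoroOp D₁ Q₁ p)
      = (s / 2) • virasoroOp D₃ Q₃ p := by
  have hDp : D₁ (D₂ p) - D₂ (D₁ p) = s • D₃ p := by
    rw [← Derivation.commutator_apply, hD, Derivation.smul_apply]
  rw [div_eq_mul_one_div s 2, ← smul_smul]
  simp only [virasoroOp, map_add, Derivation.leibniz, smul_eq_mul, Derivation.map_algebraMap,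
    Algebra.smul_def] at hDp hQ ⊢
  linear_combination (algebraMap K A (1 / 2)) ^ 2 * hDp
    + algebraMap K A (1 / 2) * algebraMap K A (1 / 4) * p * hQ

end VirasoroOp

namespace MvPolynomial

variable {σ R : Type*} [CommSemiring R]

theorem support_mul_pderiv_subset_vars (g : σ → MvPolynomial σ R) (p : MvPolynomial σ R) :
    Function.support (fun v => g v * pderiv v p) ⊆ p.vars :=
  Function.support_subset_iff'.2 fun v hv => by
    rw [pderiv_eq_zero_of_notMem_vars hv, mul_zero]

theorem finsum_mul_pderiv (g : σ → MvPolynomial σ R) (p : MvPolynomial σ R) :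
    ∑ᶠ v, g v * pderiv v p = mkDerivation R g p := by
  classical
  have hsum : ∀ q, (∑ v ∈ p.vars, g v • pderiv v) q = ∑ v ∈ p.vars, g v * pderiv v q := by
    intro q
    rw [← Derivation.coeFnAddMonoidHom_apply, map_sum, Finset.sum_apply]
    rfl
  rw [finsum_eq_sum_of_support_subset _ (support_mul_pderiv_subset_vars g p), ← hsum]
  refine (derivation_eq_of_forall_mem_vars fun i hi => ?_).symm
  simp [hsum, pderiv_X, Pi.single_apply, hi]

end MvPolynomial

theorem finsum_subtype_eq_finsum {α M : Type*} [AddCommMonoid M] {P : α → Prop} {f : α → M}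
    (hf : ∀ x, ¬ P x → f x = 0) : ∑ᶠ x : Subtype P, f x = ∑ᶠ x, f x := by
  classical
  rw [finsum_subtype_eq_finsum_cond]
  refine finsum_congr fun x => ?_
  rw [finsum_eq_if]
  split_ifs with h
  · rfl
  · exact (hf x h).symm

namespace Finset.Nat

variable {M : Type*} [AddCommMonoid M]

theorem finsum_finsum_ite_add_eq_sum_antidiagonal (g : ℕ → ℕ → M) (a : ℕ) :
    ∑ᶠ (m : ℕ) (n : ℕ), (if m + n = a then g m n else 0) = ∑ q ∈ antidiagonal a, g q.1 q.2 := by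
  have hsupp : Function.support (fun q : ℕ × ℕ => if q.1 + q.2 = a then g q.1 q.2 else 0)
      ⊆ antidiagonal a :=
    Function.support_subset_iff'.2 fun q hq => if_neg (by simpa using hq)
  rw [← finsum_curry _ ((antidiagonal a).finite_toSet.subset hsupp),
    finsum_eq_sum_of_support_subset _ hsupp]
  exact Finset.sum_congr rfl fun q hq => if_pos (mem_antidiagonal.1 hq)

theorem sum_antidiagonal_add_fst (f : ℕ → ℕ → M) {a : ℕ} (hf : ∀ i < a, ∀ j, f i j = 0)
    (b : ℕ) : ∑ q ∈ antidiagonal b, f (q.1 + a) q.2 = ∑ q ∈ antidiagonal (a + b), f q.1 q.2 := by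
  classical
  have hfilter : ∑ q ∈ antidiagonal (a + b) with a ≤ q.1, f q.1 q.2
      = ∑ q ∈ antidiagonal (a + b), f q.1 q.2 :=
    sum_filter_of_ne fun q _ hq => not_lt.1 fun h => hq (hf _ h _)
  rw [← hfilter, antidiagonal_filter_le_fst_of_le (Nat.le_add_right a b), sum_map,
    Nat.add_sub_cancel_left]
  rfl

theorem sum_antidiagonal_add_snd (f : ℕ → ℕ → M) {a : ℕ} (hf : ∀ i, ∀ j < a, f i j = 0)
    (b : ℕ) : ∑ q ∈ antidiagonal b, f q.1 (q.2 + a) = ∑ q ∈ antidiagonal (a + b), f q.1 q.2 := by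
  rw [← sum_antidiagonal_swap, ← sum_antidiagonal_swap (f := fun q => f q.1 q.2)]
  exact sum_antidiagonal_add_fst (fun i j => f j i) (fun i h j => hf j i h) b

end Finset.Nat

namespace BGD

open Finset Finset.Nat

variable {N c a b : ℕ}

abbrev IsTimeIndex (N k : ℕ) : Prop := 0 < k ∧ Odd k ∧ ¬ N ∣ k

theorem isTimeIndex_add_iff {k : ℕ} (hae : Even a) (ha : N ∣ a) :
    IsTimeIndex N (k + a) ↔ IsTimeIndex N k := by
  have hodd : Odd (k + a) ↔ Odd k := by rw [Nat.odd_add]; exact iff_true_right hae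
  rw [IsTimeIndex, IsTimeIndex, hodd, Nat.dvd_add_left ha]
  exact ⟨fun ⟨_, ho, hd⟩ => ⟨ho.pos, ho, hd⟩, fun ⟨hk, ho, hd⟩ => ⟨by omega, ho, hd⟩⟩

-- `t_{k,α}`, extended by zero to all `k : ℕ` so that the quadratic term is a sum over a full
-- antidiagonal.
noncomputable def timeVar (N : ℕ) (α : Fin c) (k : ℕ) : MvPolynomial (BGDVar N c) ℚ :=
  if h : IsTimeIndex N k then X (⟨k, h⟩, α) else 0

theorem timeVar_coe (k : BGDTimeIndex N) (α : Fin c) : timeVar N α k.1 = X (k, α) :=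
  dif_pos k.2

theorem timeVar_of_not_isTimeIndex {k : ℕ} (hk : ¬ IsTimeIndex N k) (α : Fin c) :
    timeVar N α k = 0 :=
  dif_neg hk

noncomputable def shiftDerivation (N c a : ℕ) :
    Derivation ℚ (MvPolynomial (BGDVar N c) ℚ) (MvPolynomial (BGDVar N c) ℚ) :=
  mkDerivation ℚ fun v => ((v.1.1 + a : ℕ) : ℚ) • timeVar N v.2 (v.1.1 + a)

theorem shiftDerivation_apply (p : MvPolynomial (BGDVar N c) ℚ) :
    shiftDerivation N c a p = ∑ᶠ (j : BGDTimeIndex N) (α : Fin c),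
      ((j.1 + a : ℕ) : ℚ) • (timeVar N α (j.1 + a) * pderiv (j, α) p) := by
  rw [shiftDerivation, ← finsum_mul_pderiv,
    finsum_curry _ ((p.vars.finite_toSet).subset (support_mul_pderiv_subset_vars _ p))]
  simp only [smul_mul_assoc]

theorem shiftDerivation_timeVar (hae : Even a) (ha : N ∣ a) (α : Fin c) (k : ℕ) :
    shiftDerivation N c a (timeVar N α k) = ((k + a : ℕ) : ℚ) • timeVar N α (k + a) := by
  by_cases hk : IsTimeIndex N k
  · rw [timeVar, dif_pos hk, shiftDerivation, mkDerivation_X]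
  · rw [timeVar_of_not_isTimeIndex hk, map_zero,
      timeVar_of_not_isTimeIndex ((isTimeIndex_add_iff hae ha).not.2 hk), smul_zero]

theorem lie_shiftDerivation (hae : Even a) (ha : N ∣ a) (hbe : Even b) (hb : N ∣ b) :
    ⁅shiftDerivation N c a, shiftDerivation N c b⁆
      = ((b : ℚ) - a) • shiftDerivation N c (a + b) := by
  refine derivation_ext fun ⟨k, α⟩ => ?_
  rw [Derivation.commutator_apply, Derivation.smul_apply, ← timeVar_coe,
    shiftDerivation_timeVar hbe hb, shiftDerivation_timeVar hae ha, Derivation.map_smul,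
    Derivation.map_smul, shiftDerivation_timeVar hae ha, shiftDerivation_timeVar hbe hb,
    shiftDerivation_timeVar (hae.add hbe) (Nat.dvd_add ha hb), Nat.add_right_comm,
    ← Nat.add_assoc, smul_smul, smul_smul, smul_smul, ← sub_smul]
  congr 1
  push_cast
  ring

noncomputable def quadraticTerm (N c a : ℕ) : MvPolynomial (BGDVar N c) ℚ :=
  ∑ q ∈ antidiagonal a, ∑ α : Fin c, ((q.1 : ℚ) * q.2) • (timeVar N α q.1 * timeVar N α q.2)

theorem quadraticTerm_eq_finsum : quadraticTerm N c a =
    ∑ᶠ (i : BGDTimeIndex N) (j : BGDTimeIndex N) (α : Fin c), if i.1 + j.1 = a then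
      ((i.1 : ℚ) * j.1) • (timeVar N α i.1 * timeVar N α j.1) else 0 := by
  set G : ℕ → ℕ → MvPolynomial (BGDVar N c) ℚ :=
    fun m n => ∑ α : Fin c, ((m : ℚ) * n) • (timeVar N α m * timeVar N α n)
  have hα : ∀ m n : ℕ, ∑ᶠ α : Fin c, (if m + n = a then
      ((m : ℚ) * n) • (timeVar N α m * timeVar N α n) else 0) = if m + n = a then G m n else 0 := by
    intro m n
    rw [finsum_eq_sum_of_fintype]
    split_ifs <;> simp [G]
  have hG : ∀ m n, ¬ IsTimeIndex N m ∨ ¬ IsTimeIndex N n → G m n = 0 := by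
    rintro m n (h | h) <;> simp [G, timeVar_of_not_isTimeIndex h]
  calc quadraticTerm N c a = ∑ q ∈ antidiagonal a, G q.1 q.2 := rfl
    _ = ∑ᶠ (m : ℕ) (n : ℕ), if m + n = a then G m n else 0 :=
      (finsum_finsum_ite_add_eq_sum_antidiagonal G a).symm
    _ = ∑ᶠ (i : BGDTimeIndex N) (n : ℕ), if i.1 + n = a then G i n else 0 :=
      (finsum_subtype_eq_finsum (f := fun m => ∑ᶠ n, if m + n = a then G m n else 0)
        fun m hm => by simp [hG _ _ (Or.inl hm)]).symm
    _ = ∑ᶠ (i : BGDTimeIndex N) (j : BGDTimeIndex N), if i.1 + j.1 = a then G i j else 0 :=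
      finsum_congr fun i =>
        (finsum_subtype_eq_finsum (f := fun n => if i.1 + n = a then G i n else 0)
          fun n hn => by simp [hG _ _ (Or.inr hn)]).symm
    _ = _ := by simp only [hα]

theorem shiftDerivation_quadraticTerm (hae : Even a) (ha : N ∣ a) (b : ℕ) :
    shiftDerivation N c a (quadraticTerm N c b) = ∑ q ∈ antidiagonal (a + b), ∑ α : Fin c,
      ((q.1 : ℚ) * q.2 * (((q.1 - a : ℕ) : ℚ) + ((q.2 - a : ℕ) : ℚ))) •
        (timeVar N α q.1 * timeVar N α q.2) := by
  set F : ℕ → ℕ → MvPolynomial (BGDVar N c) ℚ := fun i j =>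
    ∑ α : Fin c, (((i - a : ℕ) : ℚ) * j * i) • (timeVar N α i * timeVar N α j)
  set H : ℕ → ℕ → MvPolynomial (BGDVar N c) ℚ := fun i j =>
    ∑ α : Fin c, ((i : ℚ) * ((j - a : ℕ) : ℚ) * j) • (timeVar N α i * timeVar N α j)
  have hF : ∀ i < a, ∀ j, F i j = 0 := fun i hi j => by simp [F, Nat.sub_eq_zero_of_le hi.le]
  have hH : ∀ i, ∀ j < a, H i j = 0 := fun i j hj => by simp [H, Nat.sub_eq_zero_of_le hj.le]
  calc shiftDerivation N c a (quadraticTerm N c b)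
      = ∑ q ∈ antidiagonal b, (F (q.1 + a) q.2 + H q.1 (q.2 + a)) := by
        simp only [quadraticTerm, map_sum, Derivation.map_smul, Derivation.leibniz,
          shiftDerivation_timeVar hae ha, F, H, Nat.add_sub_cancel, ← sum_add_distrib]
        refine sum_congr rfl fun q _ => sum_congr rfl fun α _ => ?_
        simp only [smul_eq_C_mul, smul_eq_mul, Nat.cast_add, map_add, map_mul]
        ring
    _ = ∑ q ∈ antidiagonal (a + b), (F q.1 q.2 + H q.1 q.2) := by
        rw [sum_add_distrib, sum_add_distrib, sum_antidiagonal_add_fst F hF,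
          sum_antidiagonal_add_snd H hH]
    _ = _ := sum_congr rfl fun q _ => by
        simp only [F, H, ← sum_add_distrib, ← add_smul]
        congr! 2
        ring

theorem shiftDerivation_quadraticTerm_sub (hae : Even a) (ha : N ∣ a) (hbe : Even b)
    (hb : N ∣ b) :
    shiftDerivation N c a (quadraticTerm N c b) - shiftDerivation N c b (quadraticTerm N c a)
      = ((b : ℚ) - a) • quadraticTerm N c (a + b) := by
  rw [shiftDerivation_quadraticTerm hae ha, shiftDerivation_quadraticTerm hbe hb, add_comm b a,
    quadraticTerm, ← sum_sub_distrib, smul_sum]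
  refine sum_congr rfl fun q hq => ?_
  rw [← sum_sub_distrib, smul_sum]
  refine sum_congr rfl fun α _ => ?_
  rw [← sub_smul, smul_smul]
  congr 1
  -- the crux, in truncated subtraction: `i + j = a + b` gives
  -- `(i - a) + (j - a) + a = (i - b) + (j - b) + b`
  have hsum := mem_antidiagonal.1 hq
  have key : ((q.1 - a : ℕ) : ℚ) + ((q.2 - a : ℕ) : ℚ) + a
      = ((q.1 - b : ℕ) : ℚ) + ((q.2 - b : ℕ) : ℚ) + b := by
    exact_mod_cast (show q.1 - a + (q.2 - a) + a = q.1 - b + (q.2 - b) + b by omega)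
  linear_combination ((q.1 : ℚ) * q.2) * key

theorem virasoroOpBGD_eq (hae : Even a) (ha : N ∣ a) (p : MvPolynomial (BGDVar N c) ℚ) :
    virasoroOpBGD N c a hae ha p
      = virasoroOp (shiftDerivation N c a) (quadraticTerm N c a) p := by
  simp only [virasoroOpBGD, virasoroOp, shiftDerivation_apply, quadraticTerm_eq_finsum,
    ← timeVar_coe]

end BGD

theorem virasoro_commutation_BGD_general (N c : ℕ)
    (a b : ℕ) (hae : Even a) (ha : N ∣ a)
    (hbe : Even b) (hb : N ∣ b)
    (p : MvPolynomial (BGDVar N c) ℚ) :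
    virasoroOpBGD N c a hae ha (virasoroOpBGD N c b hbe hb p)
        - virasoroOpBGD N c b hbe hb (virasoroOpBGD N c a hae ha p)
      = (((b : ℚ) - (a : ℚ)) / 2) •
          virasoroOpBGD N c (a + b) (hae.add hbe) (Nat.dvd_add ha hb) p := by
  simp only [BGD.virasoroOpBGD_eq]
  exact virasoroOp_commutator (BGD.lie_shiftDerivation hae ha hbe hb)
    (BGD.shiftDerivation_quadraticTerm_sub hae ha hbe hb) p

/-- The operators `W_a` (`a` a positive even multiple of `N`) satisfy the
Virasoro commutation relation `W_a ∘ W_b − W_b ∘ W_a = ((b − a)/2) · W_{a+b}`. -/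
theorem virasoro_commutation_BGD (N c : ℕ) (hN : 2 ≤ N) (hc : 1 ≤ c)
    (a b : ℕ) (hapos : 0 < a) (hae : Even a) (ha : N ∣ a)
    (hbpos : 0 < b) (hbe : Even b) (hb : N ∣ b)
    (p : MvPolynomial (BGDVar N c) ℚ) :
    virasoroOpBGD N c a hae ha (virasoroOpBGD N c b hbe hb p)
        - virasoroOpBGD N c b hbe hb (virasoroOpBGD N c a hae ha p)
      = (((b : ℚ) - (a : ℚ)) / 2) •
          virasoroOpBGD N c (a + b) (hae.add hbe) (Nat.dvd_add ha hb) p :=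
  virasoro_commutation_BGD_general N c a b hae ha hbe hb p
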